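/- arXiv:2604.15296 — 3 statements merged into one kernel-verified Lean document; each statement's English description precedes it below -/
import Mathlib

section
/- Per-ion steady-state sign constraint: suppose an ion x has leakage flux j_x = j_x^+ (1 - exp(η ΔG_x)) with j_x^+ > 0, and is actively transported by a single reaction r with flux j_r = j_r^+ (1 - exp(η ΔG_r)), j_r^+ > 0, where ΔG_r = ΔG_E - ν ΔG_x with stoichiometry ν > 0 and driving energy ΔG_E ≤ 0. If the steady state j_x - ν j_r = 0 holds, then ΔG_E/ν ≤ ΔG_x ≤ 0. -/
/-- Per-ion steady-state sign constraint. -/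
theorem per_ion_sign (η ν jxp jrp ΔGE ΔGx : ℝ)
    (hη : 0 < η) (hν : 0 < ν) (hjx : 0 < jxp) (hjr : 0 < jrp) (hE : ΔGE ≤ 0)
    (hss : jxp * (1 - Real.exp (η * ΔGx))
      = ν * (jrp * (1 - Real.exp (η * (ΔGE - ν * ΔGx))))) :
    ΔGE / ν ≤ ΔGx ∧ ΔGx ≤ 0 := by
  have key : ∀ c d a b : ℝ, 0 < c → 0 < d → 0 < a →
      c * (1 - Real.exp (η * a)) = d * (1 - Real.exp (η * b)) → 0 < b := by
    intro c d a b hc0 hd0 ha h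
    have h1 : Real.exp (η * a) > 1 := by
      rw [show (1:ℝ) = Real.exp 0 by simp]
      exact Real.exp_lt_exp.mpr (by positivity)
    have hL : c * (1 - Real.exp (η * a)) < 0 :=
      mul_neg_of_pos_of_neg hc0 (by linarith)
    rw [h] at hL
    have h2 : 1 - Real.exp (η * b) < 0 := by
      by_contra hcon
      push_neg at hcon
      nlinarith
    have h3 : Real.exp 0 < Real.exp (η * b) := by simpa using h2
    have := Real.exp_lt_exp.mp h3
    nlinarith
  have hνj : 0 < ν * jrp := mul_pos hν hjr
  have hss' : (ν * jrp) * (1 - Real.exp (η * (ΔGE - ν * ΔGx)))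
      = jxp * (1 - Real.exp (η * ΔGx)) := by linarith [hss, mul_assoc ν jrp (1 - Real.exp (η * (ΔGE - ν * ΔGx)))]
  constructor
  · by_contra hc
    push_neg at hc
    have hb : 0 < ΔGE - ν * ΔGx := by
      have := (lt_div_iff₀ hν).mp hc
      nlinarith
    have hx : 0 < ΔGx := key (ν * jrp) jxp (ΔGE - ν * ΔGx) ΔGx hνj hjx hb hss'
    nlinarith
  · by_contra hc
    push_neg at hc
    have := key jxp (ν * jrp) ΔGx (ΔGE - ν * ΔGx) hjx hνj hc hss'.symm
    nlinarith
end

section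
/- Per-ion power bound: under the hypotheses of the per-ion lemma (steady state j_x = ν j_r, ΔG_E < 0, ν > 0, strict inequality ΔG_E/ν < ΔG_x < 0 so that ε = ν ΔG_x/ΔG_E ∈ (0,1]), the active power Q_x = -F ΔG_E j_r satisfies Q_x = -(F/ε) ΔG_x j_x and hence Q_x ≥ -F ΔG_x j_x ≥ 0, where F > 0. -/
/-!
The steady state `j_x = ν j_r` turns `Q_x = -F ΔG_E j_r` into `-(F/ε) ΔG_x j_x` with
`ε = ν ΔG_x / ΔG_E`. The window `ΔG_E / ν < ΔG_x < 0` puts `ε` in `(0, 1]`, and the downhill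
flux `j_x` is nonnegative, so dividing the nonnegative quantity `-F ΔG_x j_x` by `ε` can only
increase it.
-/

open Real Set

lemma flux_nonneg {jp η ΔG : ℝ} (hjp : 0 ≤ jp) (hη : 0 ≤ η) (hΔG : ΔG ≤ 0) :
    0 ≤ jp * (1 - exp (η * ΔG)) :=
  mul_nonneg hjp <| sub_nonneg.2 <| exp_le_one_iff.2 <| mul_nonpos_of_nonneg_of_nonpos hη hΔG

lemma div_mem_Ioc_of_le_of_neg {K : Type*} [Field K] [LinearOrder K] [IsStrictOrderedRing K]
    {a b : K} (hab : a ≤ b) (hb : b < 0) : b / a ∈ Ioc 0 1 :=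
  ⟨div_pos_of_neg_of_neg hb (hab.trans_lt hb), (div_le_one_of_neg (hab.trans_lt hb)).2 hab⟩

lemma neg_mul_mul_eq_of_steady_state {K : Type*} [Field K] {F ν ΔGE ΔGx jr : K}
    (hν : ν ≠ 0) (hx : ΔGx ≠ 0) :
    -F * ΔGE * jr = -(F / (ν * ΔGx / ΔGE)) * ΔGx * (ν * jr) := by
  rw [div_div_eq_mul_div]
  field_simp

theorem per_ion_power_bound_general (F η ν jxp ΔGE ΔGx : ℝ)
    (hF : 0 < F) (hη : 0 < η) (hν : 0 < ν) (hjx : 0 < jxp)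
    (h1 : ΔGE / ν < ΔGx) (h2 : ΔGx < 0)
    (jx jr : ℝ)
    (hjxdef : jx = jxp * (1 - Real.exp (η * ΔGx)))
    (hss : jx = ν * jr)
    (ε Qx : ℝ) (hε : ε = ν * ΔGx / ΔGE) (hQ : Qx = -F * ΔGE * jr) :
    Qx = -(F / ε) * ΔGx * jx ∧ Qx ≥ -F * ΔGx * jx ∧ -F * ΔGx * jx ≥ 0 := by
  have hεmem : ε ∈ Ioc 0 1 := hε ▸ div_mem_Ioc_of_le_of_neg
    ((div_lt_iff₀' hν).1 h1).le (mul_neg_of_pos_of_neg hν h2)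
  have hjx_nonneg : 0 ≤ jx := hjxdef ▸ flux_nonneg hjx.le hη.le h2.le
  have hbase : 0 ≤ -F * ΔGx * jx :=
    mul_nonneg (mul_nonneg_of_nonpos_of_nonpos (neg_nonpos.2 hF.le) h2.le) hjx_nonneg
  have hQx : Qx = -(F / ε) * ΔGx * jx := by
    rw [hQ, hε, hss]
    exact neg_mul_mul_eq_of_steady_state hν.ne' h2.ne
  refine ⟨hQx, ?_, hbase⟩
  calc -F * ΔGx * jx ≤ -F * ΔGx * jx / ε := le_div_self hbase hεmem.1 hεmem.2
    _ = Qx := by rw [hQx]; ring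

/-- Per-ion power bound. -/
theorem per_ion_power_bound (F η ν jxp jrp ΔGE ΔGx : ℝ)
    (hF : 0 < F) (hη : 0 < η) (hν : 0 < ν) (hjx : 0 < jxp) (hjr : 0 < jrp)
    (hE : ΔGE < 0) (h1 : ΔGE / ν < ΔGx) (h2 : ΔGx < 0)
    (jx jr : ℝ)
    (hjxdef : jx = jxp * (1 - Real.exp (η * ΔGx)))
    (hjrdef : jr = jrp * (1 - Real.exp (η * (ΔGE - ν * ΔGx))))
    (hss : jx = ν * jr)
    (ε Qx : ℝ) (hε : ε = ν * ΔGx / ΔGE) (hQ : Qx = -F * ΔGE * jr) :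
    Qx = -(F / ε) * ΔGx * jx ∧ Qx ≥ -F * ΔGx * jx ∧ -F * ΔGx * jx ≥ 0 :=
  per_ion_power_bound_general F η ν jxp ΔGE ΔGx hF hη hν hjx h1 h2 jx jr hjxdef hss ε Qx hε hQ
end

section
/- PMF must be negative (Model B simplified): suppose protons leak with flux j_H = j_H^+(1 - exp(η ΔG_H)), a metabolic pump has flux j_M = j_M^+(1 - exp(η(ΔG_E - ν_M ΔG_H))) with ΔG_E ≤ 0, ν_M > 0, an antiporter for ion x has flux j_r = j_r^+(1 - exp(η(ν_H ΔG_H - ν_x ΔG_x))) with ν_H, ν_x > 0, and x leaks with j_x = j_x^+(1 - exp(η ΔG_x)); all forward rates positive, η > 0. If the steady states j_x = ν_x j_r and j_H - ν_M j_M + ν_H j_r = 0 both hold, then ΔG_H ≤ 0. -/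
/-- PMF must be negative (Model B, simplified). -/
theorem pmf_nonpositive (η νM νH νx jHp jMp jrp jxp ΔGE ΔGH ΔGx : ℝ)
    (hη : 0 < η) (hνM : 0 < νM) (hνH : 0 < νH) (hνx : 0 < νx)
    (hjH : 0 < jHp) (hjM : 0 < jMp) (hjr : 0 < jrp) (hjx : 0 < jxp)
    (hE : ΔGE ≤ 0)
    (jH jM jr jx : ℝ)
    (hjHdef : jH = jHp * (1 - Real.exp (η * ΔGH)))
    (hjMdef : jM = jMp * (1 - Real.exp (η * (ΔGE - νM * ΔGH))))
    (hjrdef : jr = jrp * (1 - Real.exp (η * (νH * ΔGH - νx * ΔGx))))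
    (hjxdef : jx = jxp * (1 - Real.exp (η * ΔGx)))
    (hss1 : jx = νx * jr)
    (hss2 : jH - νM * jM + νH * jr = 0) :
    ΔGH ≤ 0 := by
  by_contra h
  push_neg at h
  -- jH < 0
  have hJH : jH < 0 := by
    rw [hjHdef]
    have : (1:ℝ) < Real.exp (η * ΔGH) := by
      rw [show (1:ℝ) = Real.exp 0 by simp]
      exact Real.exp_lt_exp.mpr (by positivity)
    nlinarith
  -- jM > 0
  have hJM : 0 < jM := by
    rw [hjMdef]
    have : Real.exp (η * (ΔGE - νM * ΔGH)) < 1 := by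
      rw [show (1:ℝ) = Real.exp 0 by simp]
      have hlt : ΔGE - νM * ΔGH < 0 := by nlinarith
      exact Real.exp_lt_exp.mpr (mul_neg_of_pos_of_neg hη hlt)
    nlinarith
  -- jr ≤ 0
  have hJr : jr ≤ 0 := by
    by_contra hr
    push_neg at hr
    -- jr > 0 implies exp(η(νH ΔGH - νx ΔGx)) < 1, i.e. νH ΔGH < νx ΔGx
    have h1 : Real.exp (η * (νH * ΔGH - νx * ΔGx)) < 1 := by
      rw [hjrdef] at hr
      nlinarith
    have h2 : νH * ΔGH - νx * ΔGx < 0 := by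
      by_contra h2
      push_neg at h2
      have : (1:ℝ) ≤ Real.exp (η * (νH * ΔGH - νx * ΔGx)) := by
        rw [show (1:ℝ) = Real.exp 0 by simp]
        exact Real.exp_le_exp.mpr (by nlinarith)
      linarith
    -- jx = νx jr > 0 implies ΔGx < 0
    have hjxpos : 0 < jx := by rw [hss1]; positivity
    have h3 : Real.exp (η * ΔGx) < 1 := by
      rw [hjxdef] at hjxpos; nlinarith
    have h4 : ΔGx < 0 := by
      by_contra h4
      push_neg at h4
      have : (1:ℝ) ≤ Real.exp (η * ΔGx) := by
        rw [show (1:ℝ) = Real.exp 0 by simp]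
        exact Real.exp_le_exp.mpr (by positivity)
      linarith
    nlinarith
  nlinarith
end
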